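/- For any n×n matrix y, any row vector v* ∈ M_{1,n}(ℂ), any column vector u ∈ M_{n,1}(ℂ), and 0 ≤ k ≤ n-1, one has v*·B_k(y + u v*) = v*·B_k(y). -/

import Mathlib

/-!
Expanding `adj (t I - x) = ∑_{k < n} t ^ (n - 1 - k) B_k(x)`, the claim says that the row
`v* adj (t I - y)` does not change when `y` is replaced by `y + u v*`. With `A = t I - y`, the matrix
determinant lemma `det (A - u v*) = det A * (1 - v* A⁻¹ u)` shows that `v* adj (A - u v*)` and
`v* adj A` have the same product `det (A - u v*) • v*` with `A - u v*`, and over the field of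
rational functions in `t` that matrix is invertible.
-/

open Matrix BigOperators

/-- The signed coefficients of the characteristic polynomial:
`det (t•I - x) = t^n - p 1 x * t^(n-1) - ⋯ - p n x`. -/
noncomputable def charCoeff (n : ℕ) (k : ℕ) (x : Matrix (Fin n) (Fin n) ℂ) : ℂ :=
  -(x.charpoly.coeff (n - k))

/-- `B n k x = x^k - p 1 x • x^(k-1) - ⋯ - p k x • I`. -/
noncomputable def gradB (n : ℕ) (k : ℕ) (x : Matrix (Fin n) (Fin n) ℂ) :
    Matrix (Fin n) (Fin n) ℂ :=
  x ^ k - ∑ i ∈ Finset.Icc 1 k, charCoeff n i x • x ^ (k - i)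

open Polynomial

theorem Finset.sum_Icc_one_sub_eq_sum_range {M : Type*} [AddCommMonoid M] (f : ℕ → M) (k : ℕ) :
    ∑ i ∈ Finset.Icc 1 k, f (k - i) = ∑ j ∈ Finset.range k, f j := by
  refine Finset.sum_nbij' (fun i => k - i) (fun j => k - j) ?_ ?_ ?_ ?_ (fun _ _ => rfl) <;>
    intro i hi <;> simp only [Finset.mem_Icc, Finset.mem_range] at hi ⊢ <;> omega

namespace Matrix

theorem mul_eq_smul_of_unique {m ι R : Type*} [Unique ι] [CommSemiring R]
    (N : Matrix ι ι R) (V : Matrix ι m R) : N * V = N default default • V := by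
  ext i j
  simp [mul_apply, Subsingleton.elim i default]

theorem map_C_mul_map_coeff {l m o R : Type*} [Fintype m] [CommSemiring R] (V : Matrix l m R)
    (M : Matrix m o R[X]) (d : ℕ) :
    (V.map C * M).map (fun p => p.coeff d) = V * M.map (fun p => p.coeff d) := by
  ext i j
  simp [mul_apply, finsetSum_coeff, coeff_C_mul]

theorem charmatrix_add_mul {m ι R : Type*} [Fintype m] [DecidableEq m] [Fintype ι] [CommRing R]
    (y : Matrix m m R) (u : Matrix m ι R) (v : Matrix ι m R) :
    charmatrix (y + u * v) = charmatrix y - u.map C * v.map C := by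
  rw [charmatrix, charmatrix, RingHom.mapMatrix_apply, RingHom.mapMatrix_apply,
    Matrix.map_add _ (map_add C), Matrix.map_mul, sub_add_eq_sub_sub]

theorem eq_adjugate_of_mul_eq_det_smul {m R : Type*} [Fintype m] [DecidableEq m]
    [CommRing R] [IsDomain R] {A S : Matrix m m R} (hA : A.det ≠ 0) (h : S * A = A.det • 1) :
    S = adjugate A := by
  apply smul_right_injective _ hA
  calc A.det • S = S * (A * adjugate A) := by rw [mul_adjugate, Matrix.mul_smul, Matrix.mul_one]
    _ = A.det • adjugate A := by rw [← Matrix.mul_assoc, h, Matrix.smul_mul, Matrix.one_mul]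

theorem map_C_smul_one {m R : Type*} [DecidableEq m] [CommSemiring R] (a : R) :
    (a • (1 : Matrix m m R)).map C = C a • (1 : Matrix m m R[X]) := by
  rw [smul_one_eq_diagonal, smul_one_eq_diagonal, diagonal_map (map_zero C)]

variable {m ι : Type*} [Fintype m] [DecidableEq m]

theorem charmatrix_eq_smul_one_sub_map {R : Type*} [CommRing R] (x : Matrix m m R) :
    charmatrix x = (X : R[X]) • (1 : Matrix m m R[X]) - x.map C := by
  rw [charmatrix, scalar_apply, smul_one_eq_diagonal, RingHom.mapMatrix_apply]

variable [Unique ι]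

theorem mul_adjugate_sub_mul_of_field {K : Type*} [Field K] {A : Matrix m m K}
    (U : Matrix m ι K) (V : Matrix ι m K) (hA : A.det ≠ 0) (hB : (A - U * V).det ≠ 0) :
    V * adjugate (A - U * V) = V * adjugate A := by
  set B := A - U * V
  set c := (V * A⁻¹ * U) default default
  have hAu : IsUnit A.det := hA.isUnit
  have hdetB : B.det = A.det * (1 - c) := by
    rw [show B = A + -U * V by simp [B, sub_eq_add_neg], det_add_mul _ _ hAu,
      det_unique (1 + _)]
    simp [c, Matrix.mul_neg, sub_eq_add_neg]
  have hadjA : adjugate A = A.det • A⁻¹ := by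
    rw [inv_def, Ring.inverse_eq_inv', smul_smul, mul_inv_cancel₀ hA, one_smul]
  have hVA : V * A⁻¹ * B = (1 - c) • V := by
    rw [Matrix.mul_sub, Matrix.mul_assoc V, nonsing_inv_mul _ hAu, Matrix.mul_one,
      ← Matrix.mul_assoc, mul_eq_smul_of_unique, sub_smul, one_smul]
  have key : V * adjugate B * B = V * adjugate A * B := by
    rw [Matrix.mul_assoc V, adjugate_mul, Matrix.mul_smul, Matrix.mul_one, hadjA,
      Matrix.mul_smul, Matrix.smul_mul, hVA, smul_smul, hdetB]
  simpa only [mul_nonsing_inv_cancel_right _ _ hB.isUnit] using congrArg (· * B⁻¹) key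

theorem mul_adjugate_sub_mul {R : Type*} [CommRing R] [IsDomain R] {A : Matrix m m R}
    (U : Matrix m ι R) (V : Matrix ι m R) (hA : A.det ≠ 0) (hB : (A - U * V).det ≠ 0) :
    V * adjugate (A - U * V) = V * adjugate A := by
  let f := algebraMap R (FractionRing R)
  have hf : Function.Injective f := IsFractionRing.injective R (FractionRing R)
  have hdet (M : Matrix m m R) (hM : M.det ≠ 0) : (M.map f).det ≠ 0 := by
    rw [← RingHom.mapMatrix_apply, ← RingHom.map_det]
    exact (map_ne_zero_iff f hf).mpr hM
  have hadj (M : Matrix m m R) : (adjugate M).map f = adjugate (M.map f) := f.map_adjugate M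
  apply map_injective hf
  have hmap := mul_adjugate_sub_mul_of_field (U.map f) (V.map f) (hdet A hA)
    (by simpa only [Matrix.map_sub f (map_sub f), Matrix.map_mul] using hdet _ hB)
  simpa only [Matrix.map_mul, hadj, Matrix.map_sub f (map_sub f)] using hmap

end Matrix

variable {n : ℕ}

noncomputable def gradBPoly (n k : ℕ) (x : Matrix (Fin n) (Fin n) ℂ) : ℂ[X] :=
  X ^ k - ∑ i ∈ Finset.Icc 1 k, C (charCoeff n i x) * X ^ (k - i)

theorem aeval_gradBPoly (k : ℕ) (x : Matrix (Fin n) (Fin n) ℂ) :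
    aeval x (gradBPoly n k x) = gradB n k x := by
  simp [gradBPoly, gradB, Algebra.smul_def]

theorem gradBPoly_succ (k : ℕ) (x : Matrix (Fin n) (Fin n) ℂ) :
    gradBPoly n (k + 1) x = gradBPoly n k x * X - C (charCoeff n (k + 1) x) := by
  have hpow : ∀ i ∈ Finset.Icc 1 k, X ^ (k + 1 - i) = X ^ (k - i) * (X : ℂ[X]) := fun i hi => by
    rw [← pow_succ, Nat.sub_add_comm (Finset.mem_Icc.mp hi).2]
  rw [gradBPoly, gradBPoly, Finset.sum_Icc_succ_top (by omega), Finset.sum_congr rfl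
    (fun i hi => by rw [hpow i hi, ← mul_assoc]), Nat.sub_self, sub_mul, Finset.sum_mul]
  ring

theorem gradBPoly_self (x : Matrix (Fin n) (Fin n) ℂ) : gradBPoly n n x = x.charpoly := by
  have hsum : ∑ i ∈ Finset.Icc 1 n, C (charCoeff n i x) * X ^ (n - i)
      = -∑ j ∈ Finset.range n, C (x.charpoly.coeff j) * X ^ j := by
    rw [← Finset.sum_neg_distrib, ← Finset.sum_Icc_one_sub_eq_sum_range]
    simp [charCoeff]
  rw [gradBPoly, hsum, sub_neg_eq_add]
  conv_rhs => rw [x.charpoly_monic.as_sum, charpoly_natDegree_eq_dim, Fintype.card_fin]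

theorem gradB_succ (k : ℕ) (x : Matrix (Fin n) (Fin n) ℂ) :
    gradB n (k + 1) x = gradB n k x * x - charCoeff n (k + 1) x • 1 := by
  rw [← aeval_gradBPoly, gradBPoly_succ, map_sub, map_mul, aeval_gradBPoly, aeval_X, aeval_C,
    Algebra.algebraMap_eq_smul_one]

theorem gradB_self (x : Matrix (Fin n) (Fin n) ℂ) : gradB n n x = 0 := by
  rw [← aeval_gradBPoly, gradBPoly_self, aeval_self_charpoly]

noncomputable def adjPoly (n m : ℕ) (x : Matrix (Fin n) (Fin n) ℂ) : Matrix (Fin n) (Fin n) ℂ[X] :=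
  ∑ k ∈ Finset.range m, (X : ℂ[X]) ^ (m - 1 - k) • (gradB n k x).map C

theorem adjPoly_succ (m : ℕ) (x : Matrix (Fin n) (Fin n) ℂ) :
    adjPoly n (m + 1) x = (X : ℂ[X]) • adjPoly n m x + (gradB n m x).map C := by
  rw [adjPoly, adjPoly, Finset.sum_range_succ, Nat.add_sub_cancel, Nat.sub_self, pow_zero,
    one_smul, Finset.smul_sum]
  congr 1
  refine Finset.sum_congr rfl fun k hk => ?_
  rw [smul_smul, ← pow_succ', show m - 1 - k + 1 = m - k by grind]

theorem adjPoly_mul_charmatrix (m : ℕ) (x : Matrix (Fin n) (Fin n) ℂ) :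
    adjPoly n m x * charmatrix x = gradBPoly n m x • 1 - (gradB n m x).map C := by
  induction m with
  | zero => simp [adjPoly, gradBPoly, gradB]
  | succ m ih =>
    have hB : gradB n m x * x = gradB n (m + 1) x + charCoeff n (m + 1) x • 1 := by
      rw [gradB_succ, sub_add_cancel]
    rw [adjPoly_succ, Matrix.add_mul, Matrix.smul_mul, ih, charmatrix_eq_smul_one_sub_map,
      Matrix.mul_sub, Matrix.mul_smul, Matrix.mul_one, ← Matrix.map_mul, hB,
      Matrix.map_add _ (map_add C), map_C_smul_one, gradBPoly_succ]
    module

theorem adjugate_charmatrix (x : Matrix (Fin n) (Fin n) ℂ) :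
    adjugate (charmatrix x) = adjPoly n n x := by
  refine (eq_adjugate_of_mul_eq_det_smul x.charpoly_monic.ne_zero ?_).symm
  rw [adjPoly_mul_charmatrix, gradB_self, gradBPoly_self, Matrix.map_zero _ (map_zero C), sub_zero]
  rfl

theorem adjPoly_map_coeff {m k : ℕ} (hk : k < m) (x : Matrix (Fin n) (Fin n) ℂ) :
    (adjPoly n m x).map (fun p => p.coeff (m - 1 - k)) = gradB n k x := by
  ext i j
  rw [map_apply, adjPoly, Matrix.sum_apply, finsetSum_coeff, Finset.sum_eq_single k]
  · simp
  · intro l hl hlk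
    simp only [Matrix.smul_apply, map_apply, smul_eq_mul, coeff_X_pow_mul', coeff_C]
    grind
  · simp [hk]

/--  for a rank-one perturbation. -/
theorem stmt3 (n : ℕ) (k : ℕ) (hk : k ≤ n - 1) (y : Matrix (Fin n) (Fin n) ℂ)
    (vstar : Matrix (Fin 1) (Fin n) ℂ) (u : Matrix (Fin n) (Fin 1) ℂ) :
    vstar * gradB n k (y + u * vstar) = vstar * gradB n k y := by
  -- `n - 1` truncates, so `k = n = 0` is allowed by `hk`.
  obtain hkn | rfl : k < n ∨ k = n := by omega
  · have hadj : vstar.map C * adjugate (charmatrix (y + u * vstar))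
        = vstar.map C * adjugate (charmatrix y) := by
      rw [charmatrix_add_mul]
      refine mul_adjugate_sub_mul _ _ y.charpoly_monic.ne_zero ?_
      rw [← charmatrix_add_mul]
      exact (y + u * vstar).charpoly_monic.ne_zero
    rw [← adjPoly_map_coeff hkn, ← adjPoly_map_coeff hkn, ← adjugate_charmatrix,
      ← adjugate_charmatrix, ← map_C_mul_map_coeff, ← map_C_mul_map_coeff, hadj]
  · rw [gradB_self, gradB_self]
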